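/- Let γ be an automorphism of the infinite rooted binary tree, and let w be a vertex at level n lying in a stable cycle of γ of length k ≥ 1. Then the section of γ^k at each vertex (w)γ^i, for i = 0, …, k−1, is an odometer. -/

import Mathlib

namespace BinTree

/-- Vertices of the infinite rooted binary tree: finite words over `{0,1}`. -/
abbrev Vertex : Type := List Bool

/-- A function on vertices is a tree automorphism function if it preserves lengths
(levels) and prefixes. -/
def IsTreeAutFun (f : Vertex → Vertex) : Prop :=
  (∀ v, (f v).length = v.length) ∧ ∀ v w : Vertex, (f (v ++ w)).take v.length = f v

/-- `Ω`: the automorphism group of the infinite rooted binary tree, realized as the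
subgroup of permutations of the set of vertices preserving the tree structure. -/
def TreeAut : Subgroup (Equiv.Perm Vertex) where
  carrier := {e | IsTreeAutFun ⇑e}
  one_mem' := ⟨fun _ => rfl, fun v w => by
    simpa using List.take_left (l₁ := v) (l₂ := w)⟩
  mul_mem' := by
    rintro a b ha hb
    obtain ⟨ha1, ha2⟩ := ha
    obtain ⟨hb1, hb2⟩ := hb
    refine ⟨fun v => ?_, fun v w => ?_⟩
    · simp [Equiv.Perm.mul_apply, ha1, hb1]
    · have hb' : b (v ++ w) = b v ++ (b (v ++ w)).drop v.length := by
        conv_lhs => rw [← List.take_append_drop v.length (b (v ++ w)), hb2]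
      have hlen : (b v).length = v.length := hb1 v
      calc ((a * b) (v ++ w)).take v.length
          = (a (b v ++ (b (v ++ w)).drop v.length)).take v.length := by
            rw [Equiv.Perm.mul_apply, ← hb']
        _ = a (b v) := by rw [← hlen]; exact ha2 _ _
        _ = (a * b) v := rfl
  inv_mem' := by
    intro a ha
    obtain ⟨ha1, ha2⟩ := ha
    show IsTreeAutFun ⇑a⁻¹
    have hlen : ∀ v : Vertex, (a⁻¹ v).length = v.length := by
      intro v
      have h := ha1 (a⁻¹ v)
      rw [(show ∀ x, a (a⁻¹ x) = x from Equiv.apply_symm_apply a)] at h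
      exact h.symm ▸ rfl
    refine ⟨hlen, fun v w => ?_⟩
    have htl : ((a⁻¹ (v ++ w)).take v.length).length = v.length := by
      rw [List.length_take, hlen, List.length_append]
      omega
    have key : a ((a⁻¹ (v ++ w)).take v.length) = v := by
      have h2 := ha2 ((a⁻¹ (v ++ w)).take v.length) ((a⁻¹ (v ++ w)).drop v.length)
      rw [List.take_append_drop, htl, (show ∀ x, a (a⁻¹ x) = x from Equiv.apply_symm_apply a)] at h2
      rw [← h2]
      simpa using List.take_left (l₁ := v) (l₂ := w)
    have h3 := congrArg (⇑a⁻¹) key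
    rwa [(show ∀ x, a⁻¹ (a x) = x from Equiv.symm_apply_apply a)] at h3

/-- wreath recursion, forward map: `(g,h)σᵗ` -/
def wrFun (g h : Vertex → Vertex) (t : Bool) : Vertex → Vertex
  | [] => []
  | x :: v => (xor x t) :: (cond x (h v) (g v))

/-- wreath recursion, inverse map -/
def wrFunInv (g h : Vertex → Vertex) (t : Bool) : Vertex → Vertex
  | [] => []
  | y :: w => (xor y t) :: (cond (xor y t) (h w) (g w))

/-- `(g,h)σᵗ` as a permutation of the vertices. -/
def wrPerm (g h : Equiv.Perm Vertex) (t : Bool) : Equiv.Perm Vertex where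
  toFun := wrFun ⇑g ⇑h t
  invFun := wrFunInv ⇑g.symm ⇑h.symm t
  left_inv := by
    intro v
    cases v with
    | nil => rfl
    | cons x v => cases x <;> cases t <;> simp [wrFun, wrFunInv]
  right_inv := by
    intro v
    cases v with
    | nil => rfl
    | cons x v => cases x <;> cases t <;> simp [wrFun, wrFunInv]

/-- The element `(g,h)σᵗ` of `Ω`: acts on the first level by `σᵗ` (where `σ` is the
swap of the two level-one subtrees), with section `g` at the vertex `0` and section
`h` at the vertex `1`.  Thus `(γ₀,γ₁)τ` of the wreath recursion
`Ω ≃ (Ω × Ω) ⋊ S₂` is `wr γ₀ γ₁ t` (`t = true` iff `τ = σ`). -/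
def wr (g h : TreeAut) (t : Bool) : TreeAut :=
  ⟨wrPerm g.1 h.1 t, by
    have hg : IsTreeAutFun ⇑g.1 := g.2
    have hh : IsTreeAutFun ⇑h.1 := h.2
    constructor
    · intro v
      cases v with
      | nil => rfl
      | cons x v =>
        cases x <;> simp [wrPerm, wrFun, hg.1, hh.1]
    · intro v w
      cases v with
      | nil => simp [wrPerm, wrFun]
      | cons x v =>
        cases x <;> simp [wrPerm, wrFun, hg.2, hh.2]⟩

/-- Application of a tree automorphism to a vertex. -/
def ap (γ : TreeAut) (v : Vertex) : Vertex := γ.1 v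

/-- The permutation induced by `γ ∈ Ω` on level `n` of the tree. -/
def levelPerm (n : ℕ) (γ : TreeAut) : Equiv.Perm (List.Vector Bool n) where
  toFun v := ⟨γ.1 v.1, by
    have h : IsTreeAutFun ⇑γ.1 := γ.2
    rw [h.1 v.1]; exact v.2⟩
  invFun v := ⟨γ.1.symm v.1, by
    have h : IsTreeAutFun ⇑γ.1 := γ.2
    have h2 := h.1 (γ.1.symm v.1)
    rw [Equiv.apply_symm_apply] at h2
    exact h2.symm.trans v.2⟩
  left_inv v := Subtype.ext (Equiv.symm_apply_apply _ _)
  right_inv v := Subtype.ext (Equiv.apply_symm_apply _ _)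

/-- Restriction to level `n` as a group homomorphism. -/
def levelHom (n : ℕ) : TreeAut →* Equiv.Perm (List.Vector Bool n) where
  toFun := levelPerm n
  map_one' := Equiv.ext fun v => Subtype.ext rfl
  map_mul' := fun g h => Equiv.ext fun v => Subtype.ext rfl

/-- `sgn_n`: the sign of the permutation induced on level `n`. -/
def sgn (n : ℕ) (γ : TreeAut) : ℤˣ := Equiv.Perm.sign (levelPerm n γ)

/-- An odometer: acts as a single `2^n`-cycle on each level `n ≥ 1`. -/
def IsOdometer (γ : TreeAut) : Prop :=
  ∀ n : ℕ, 1 ≤ n → (levelPerm n γ).IsCycle ∧ (levelPerm n γ).support = Finset.univ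

/-- The profinite topology on `Ω`: the coarsest topology making all level
restrictions (to the discrete finite groups) continuous. -/
instance : TopologicalSpace TreeAut :=
  ⨅ n : ℕ, TopologicalSpace.induced (levelPerm n) ⊥

/-- A vertex `w` is in a stable cycle of `γ` of length `k`: its `γ`-orbit has exactly
`k` elements, and for every level `m` above the level of `w`, all level-`m` vertices
lying above this orbit are in one single `γ`-cycle (necessarily of length
`2^(m - n) * k`, which we record via the periodicity condition). -/
def InStableCycle (γ : TreeAut) (w : Vertex) (k : ℕ) : Prop :=
  0 < k ∧ ap (γ ^ k) w = w ∧ (∀ j : ℕ, 0 < j → j < k → ap (γ ^ j) w ≠ w) ∧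
  (∀ u : Vertex, w.length < u.length → (∃ i : ℕ, u.take w.length = ap (γ ^ i) w) →
    (ap (γ ^ (2 ^ (u.length - w.length) * k)) u = u ∧
      ∀ u' : Vertex, u'.length = u.length →
        (∃ i : ℕ, u'.take w.length = ap (γ ^ i) w) → ∃ j : ℕ, ap (γ ^ j) u = u'))

/-- Self-similar subgroup: closed under taking sections (here the section of `γ` at
the first-level vertex `x` is characterized by `(xv)γ = (x)γ ⬝ (v)γₓ`). -/
def SelfSimilar (H : Subgroup TreeAut) : Prop :=
  ∀ γ ∈ H, ∀ x : Bool, ∀ δ : TreeAut,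
    (∀ v : Vertex, ap γ (x :: v) = ap γ [x] ++ ap δ v) → δ ∈ H


/-!
Fix `u = (w)γ^i`; since `γ^k` fixes `u`, iterating the defining identity of the section gives
`(uv)γ^{kq} = u ⬝ (v)δ^q`. Stability says that `γ` permutes all vertices above the orbit of `w`
transitively, level by level. A power `γ^j` carrying `uv` to `uv'` fixes `u`, hence `w`, so `k ∣ j`;
thus `δ` is transitive on every level.
-/

lemma ap_length (γ : TreeAut) (v : Vertex) : (ap γ v).length = v.length :=
  (show IsTreeAutFun ⇑γ.1 from γ.2).1 v

lemma ap_append_take (γ : TreeAut) (v w : Vertex) : (ap γ (v ++ w)).take v.length = ap γ v :=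
  (show IsTreeAutFun ⇑γ.1 from γ.2).2 v w

lemma ap_injective (γ : TreeAut) : Function.Injective (ap γ) := γ.1.injective

lemma ap_mul (g h : TreeAut) (v : Vertex) : ap (g * h) v = ap g (ap h v) := rfl

lemma ap_pow (γ : TreeAut) (j : ℕ) : ap (γ ^ j) = (ap γ)^[j] := by
  induction j with
  | zero => rfl
  | succ j ih => rw [pow_succ', Function.iterate_succ', ← ih]; rfl

lemma ap_pow_comm (γ : TreeAut) (i j : ℕ) (v : Vertex) :
    ap (γ ^ i) (ap (γ ^ j) v) = ap (γ ^ j) (ap (γ ^ i) v) := by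
  rw [← ap_mul, ← ap_mul, pow_mul_comm]

lemma levelPerm_pow (n : ℕ) (γ : TreeAut) (j : ℕ) :
    levelPerm n (γ ^ j) = levelPerm n γ ^ j :=
  map_pow (levelHom n) γ j

lemma ap_pow_append_of_section {g δ : TreeAut} {u : Vertex} (hu : ap g u = u)
    (hδ : ∀ v : Vertex, ap g (u ++ v) = ap g u ++ ap δ v) (q : ℕ) (v : Vertex) :
    ap (g ^ q) (u ++ v) = u ++ ap (δ ^ q) v := by
  induction q with
  | zero => rfl
  | succ q ih => rw [pow_succ', ap_mul, ih, hδ, hu, pow_succ', ap_mul]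

lemma _root_.Equiv.Perm.IsCycleOn.isCycle_and_support_eq_univ {α : Type*} [Fintype α] [DecidableEq α]
    [Nontrivial α] {f : Equiv.Perm α} (hf : f.IsCycleOn Set.univ) :
    f.IsCycle ∧ f.support = Finset.univ :=
  ⟨Equiv.Perm.isCycle_iff_exists_isCycleOn.2 ⟨_, Set.nontrivial_univ, hf, fun _ _ => trivial⟩,
    Finset.eq_univ_iff_forall.2 fun _ =>
      Equiv.Perm.mem_support.2 (hf.apply_ne Set.nontrivial_univ trivial)⟩

lemma isOdometer_of_exists_pow_eq {δ : TreeAut}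
    (h : ∀ v v' : Vertex, v'.length = v.length → 0 < v.length → ∃ q : ℕ, ap (δ ^ q) v = v') :
    IsOdometer δ := by
  intro n hn
  have : Nontrivial (List.Vector Bool n) := Fintype.one_lt_card_iff_nontrivial.1 <| by
    rw [card_vector, Fintype.card_bool]
    exact Nat.one_lt_two_pow (by omega)
  refine Equiv.Perm.IsCycleOn.isCycle_and_support_eq_univ ⟨Set.bijOn_univ.2 (Equiv.bijective _), ?_⟩
  intro x _ y _
  obtain ⟨q, hq⟩ := h x.1 y.1 (y.2.trans x.2.symm) (by rw [x.2]; omega)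
  exact ⟨q, by rw [zpow_natCast, ← levelPerm_pow]; exact Subtype.ext hq⟩

namespace InStableCycle

variable {γ : TreeAut} {w : Vertex} {k : ℕ}

lemma minimalPeriod_eq (hst : InStableCycle γ w k) : Function.minimalPeriod (ap γ) w = k := by
  obtain ⟨hk, hwk, hmin, -⟩ := hst
  have hper : Function.IsPeriodicPt (ap γ) k w := by rw [Function.IsPeriodicPt, ← ap_pow]; exact hwk
  refine le_antisymm (hper.minimalPeriod_le hk) (not_lt.1 fun hlt => ?_)
  refine hmin _ (hper.minimalPeriod_pos hk) hlt ?_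
  rw [ap_pow]
  exact Function.isPeriodicPt_minimalPeriod _ _

lemma dvd_of_ap_pow_eq (hst : InStableCycle γ w k) {j : ℕ} (hj : ap (γ ^ j) w = w) : k ∣ j := by
  rw [ap_pow] at hj
  exact hst.minimalPeriod_eq ▸ Function.IsPeriodicPt.minimalPeriod_dvd hj

lemma exists_pow_append_eq (hst : InStableCycle γ w k) (i : ℕ) {v v' : Vertex}
    (hlen : v'.length = v.length) (hpos : 0 < v.length) :
    ∃ q : ℕ, ap ((γ ^ k) ^ q) (ap (γ ^ i) w ++ v) = ap (γ ^ i) w ++ v' := by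
  set u := ap (γ ^ i) w
  have hu : u.length = w.length := ap_length _ _
  have above : ∀ x : Vertex, (u ++ x).take w.length = u := fun x => by rw [← hu, List.take_left]
  obtain ⟨-, htrans⟩ := hst.2.2.2 (u ++ v) (by simp [hu, hpos]) ⟨i, above v⟩
  obtain ⟨j, hj⟩ := htrans (u ++ v') (by simp [hlen]) ⟨i, above v'⟩
  have hju : ap (γ ^ j) u = u := by rw [← ap_append_take _ u v, hj, List.take_left]
  have hjw : ap (γ ^ j) w = w := ap_injective (γ ^ i) (by rw [ap_pow_comm]; exact hju)
  obtain ⟨q, rfl⟩ := hst.dvd_of_ap_pow_eq hjw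
  exact ⟨q, by rw [← pow_mul, hj]⟩

end InStableCycle

theorem section_of_stable_cycle_is_odometer_general (γ : TreeAut) (w : Vertex) (k : ℕ)
    (hst : InStableCycle γ w k) (i : ℕ) (δ : TreeAut)
    (hδ : ∀ v : Vertex,
      ap (γ ^ k) (ap (γ ^ i) w ++ v) = ap (γ ^ k) (ap (γ ^ i) w) ++ ap δ v) :
    IsOdometer δ := by
  have hfix : ap (γ ^ k) (ap (γ ^ i) w) = ap (γ ^ i) w := by rw [ap_pow_comm, hst.2.1]
  refine isOdometer_of_exists_pow_eq fun v v' hlen hpos => ?_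
  obtain ⟨q, hq⟩ := hst.exists_pow_append_eq i hlen hpos
  rw [ap_pow_append_of_section hfix hδ] at hq
  exact ⟨q, List.append_cancel_left hq⟩

/-- if the vertex `w` (at level `n = w.length`) is in a stable cycle of
`γ` of length `k ≥ 1`, then the section of `γ^k` at each vertex `(w)γ^i`,
`i = 0,…,k−1`, is an odometer.  The section `δ` of `γ^k` at the vertex `u = (w)γ^i`
is characterized by `(uv)γ^k = (u)γ^k ⬝ (v)δ` for all words `v`. -/
theorem section_of_stable_cycle_is_odometer (γ : TreeAut) (w : Vertex) (k : ℕ)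
    (hst : InStableCycle γ w k) (i : ℕ) (hi : i < k) (δ : TreeAut)
    (hδ : ∀ v : Vertex,
      ap (γ ^ k) (ap (γ ^ i) w ++ v) = ap (γ ^ k) (ap (γ ^ i) w) ++ ap δ v) :
    IsOdometer δ :=
  section_of_stable_cycle_is_odometer_general γ w k hst i δ hδ

end BinTree
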